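/- arXiv:1303.7096 — 3 statements merged into one kernel-verified Lean document; each statement's English description precedes it below -/
import Mathlib

section
/- The commutator G₂ = G₃·G₁⁻¹·G₃⁻¹·G₁ is equal to the explicit matrix !![2, (3−ω)/2, −1; (−3−ω)/2, −1, 0; −1, 0, 0], and it preserves the Hermitian form: G₂ᴴ·J·G₂ = J. -/
/-! G₁ and G₃ are unitary for the form J, and matrices preserving a form with invertible Gram
matrix are closed under products and inverses, so their commutator G₂ preserves J as well.
The explicit entries of G₂ come from multiplying out, using the inverses of the unipotent
matrices G₁, G₃ and ω² = -7. -/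

noncomputable section

open Matrix

/-- ω = i·√7 -/
def ω : ℂ := Complex.I * Real.sqrt 7

/-- The matrix of the Hermitian form of signature (2,1). -/
def Jmat : Matrix (Fin 3) (Fin 3) ℂ := !![0,0,1; 0,1,0; 1,0,0]

def G₁ : Matrix (Fin 3) (Fin 3) ℂ := !![1, 1, (-1-ω)/2; 0, 1, -1; 0, 0, 1]

def G₃ : Matrix (Fin 3) (Fin 3) ℂ := !![1, 0, 0; -1, 1, 0; (-1+ω)/2, 1, 1]

/-- The commutator G₂ = G₃ G₁⁻¹ G₃⁻¹ G₁. -/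
def G₂ : Matrix (Fin 3) (Fin 3) ℂ := G₃ * G₁⁻¹ * G₃⁻¹ * G₁

namespace Matrix

variable {n R : Type*} [Fintype n] [CommRing R] [StarRing R]

def PreservesForm (J A : Matrix n n R) : Prop := Aᴴ * J * A = J

variable {J A B : Matrix n n R}

theorem PreservesForm.mul (hA : PreservesForm J A) (hB : PreservesForm J B) :
    PreservesForm J (A * B) :=
  calc (A * B)ᴴ * J * (A * B) = Bᴴ * (Aᴴ * J * A) * B := by
        simp only [conjTranspose_mul, Matrix.mul_assoc]
    _ = J := by rw [hA, hB]

variable [DecidableEq n]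

theorem PreservesForm.isUnit_det (hJ : IsUnit J.det) (hA : PreservesForm J A) : IsUnit A.det := by
  have h := congrArg det hA
  rw [det_mul, det_mul, det_conjTranspose] at h
  exact .of_mul_eq_one (star A.det) (hJ.mul_left_cancel (by linear_combination h))

theorem PreservesForm.inv (hJ : IsUnit J.det) (hA : PreservesForm J A) :
    PreservesForm J A⁻¹ :=
  calc A⁻¹ᴴ * J * A⁻¹ = A⁻¹ᴴ * (Aᴴ * J * A) * A⁻¹ := by rw [hA]
    _ = (A * A⁻¹)ᴴ * J * (A * A⁻¹) := by simp only [conjTranspose_mul, Matrix.mul_assoc]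
    _ = J := by simp [mul_nonsing_inv _ (hA.isUnit_det hJ)]

end Matrix

lemma ω_sq : ω ^ 2 = -7 := by
  simp [ω, mul_pow, ← Complex.ofReal_pow]

lemma star_ω : star ω = -ω := by
  simp [ω]

lemma isUnit_det_Jmat : IsUnit Jmat.det := by
  simp [Jmat, det_fin_three]

lemma preservesForm_G₁ : PreservesForm Jmat G₁ := by
  rw [PreservesForm, eta_fin_three G₁ᴴ]
  simp [G₁, Jmat, star_ω]
  ring_nf

lemma preservesForm_G₃ : PreservesForm Jmat G₃ := by
  rw [PreservesForm, eta_fin_three G₃ᴴ]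
  simp [G₃, Jmat, star_ω]
  ring_nf

lemma G₁_inv : G₁⁻¹ = !![1, -1, (-1+ω)/2; 0, 1, 1; 0, 0, 1] := by
  refine inv_eq_right_inv ?_
  simp [G₁, one_fin_three]
  ring

lemma G₃_inv : G₃⁻¹ = !![1, 0, 0; 1, 1, 0; (-1-ω)/2, -1, 1] := by
  refine inv_eq_right_inv ?_
  simp [G₃, one_fin_three]
  ring

lemma G₂_eq : G₂ = !![2, (3-ω)/2, -1; (-3-ω)/2, -1, 0; -1, 0, 0] := by
  rw [G₂, G₁_inv, G₃_inv, G₁, G₃]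
  simp
  grind [ω_sq]

theorem stmt1 :
    G₂ = !![2, (3-ω)/2, -1; (-3-ω)/2, -1, 0; -1, 0, 0] ∧
    G₂ᴴ * Jmat * G₂ = Jmat := by
  have hG₁ := preservesForm_G₁
  have hG₃ := preservesForm_G₃
  exact ⟨G₂_eq, ((hG₃.mul (hG₁.inv isUnit_det_Jmat)).mul (hG₃.inv isUnit_det_Jmat)).mul hG₁⟩
end
end

section
/- The matrix P is invertible and conjugates the generators of Γ₃ into Γ₂: P⁻¹·A₁·P = G₁⁻¹·G₃·G₁ and P⁻¹·A₃·P = G₃. (In particular the groups generated by {A₁, A₃} and by {G₁⁻¹G₃G₁, G₃} are conjugate in GL₃(ℂ).) -/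
/-!
Every identity reduces, entry by entry, to a polynomial identity in `ω` modulo `ω ^ 2 = -7`.
The conjugations are checked in the inverse-free form `A * P = P * X`, which suffices because
`det P = (ω - 5) / 2` is nonzero.
-/

noncomputable section

open Matrix

def A₁ : Matrix (Fin 3) (Fin 3) ℂ := !![1, 1, -1/2; 0, 1, -1; 0, 0, 1]

def A₃ : Matrix (Fin 3) (Fin 3) ℂ := !![1, 0, 0; (5-ω)/4, 1, 0; -1, (-5-ω)/4, 1]

def P : Matrix (Fin 3) (Fin 3) ℂ :=
  !![1, 0, 0; (-3-ω)/4, (-5+ω)/4, 0; (-1+ω)/2, (-1+ω)/2, 2]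

theorem Matrix.inv_mul_mul_eq_of_mul_eq_mul {n R : Type*} [Fintype n] [DecidableEq n] [CommRing R]
    {P A X : Matrix n n R} (hP : IsUnit P) (h : A * P = P * X) : P⁻¹ * A * P = X := by
  rw [mul_assoc, h, nonsing_inv_mul_cancel_left P X ((isUnit_iff_isUnit_det P).mp hP)]

lemma det_P : P.det = (ω - 5) / 2 := by
  rw [P, det_fin_three]
  simp only [of_apply, cons_val', cons_val_zero, cons_val_one, cons_val, cons_val_fin_one]
  ring

lemma isUnit_P : IsUnit P := by
  rw [isUnit_iff_isUnit_det, det_P, isUnit_iff_ne_zero]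
  intro h
  have hω : ω = 5 := by linear_combination 2 * h
  have := ω_sq
  rw [hω] at this
  norm_num at this

lemma G₁_inv_mul_G₃_mul_G₁ : G₁⁻¹ * G₃ * G₁ =
    !![(1-ω)/2, -1, -1; (-3+ω)/2, (1+ω)/2, (3+ω)/2; (-1+ω)/2, (1+ω)/2, 2] := by
  rw [G₁_inv, G₃, G₁, mul_fin_three, mul_fin_three]
  ext i j
  fin_cases i <;> fin_cases j <;>
    simp only [Fin.isValue, Fin.zero_eta, Fin.mk_one, Fin.reduceFinMk, of_apply, cons_val',
      cons_val_zero, cons_val_one, cons_val, cons_val_fin_one] <;>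
    grind [ω_sq]

lemma A₁_mul_P : A₁ * P = P * (G₁⁻¹ * G₃ * G₁) := by
  rw [G₁_inv_mul_G₃_mul_G₁, A₁, P, mul_fin_three, mul_fin_three]
  ext i j
  fin_cases i <;> fin_cases j <;>
    simp only [Fin.isValue, Fin.zero_eta, Fin.mk_one, Fin.reduceFinMk, of_apply, cons_val',
      cons_val_zero, cons_val_one, cons_val, cons_val_fin_one] <;>
    grind [ω_sq]

lemma A₃_mul_P : A₃ * P = P * G₃ := by
  rw [A₃, P, G₃, mul_fin_three, mul_fin_three]
  ext i j
  fin_cases i <;> fin_cases j <;>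
    simp only [Fin.isValue, Fin.zero_eta, Fin.mk_one, Fin.reduceFinMk, of_apply, cons_val',
      cons_val_zero, cons_val_one, cons_val, cons_val_fin_one] <;>
    grind [ω_sq]

theorem stmt10 :
    IsUnit P ∧ P⁻¹ * A₁ * P = G₁⁻¹ * G₃ * G₁ ∧ P⁻¹ * A₃ * P = G₃ :=
  ⟨isUnit_P, inv_mul_mul_eq_of_mul_eq_mul isUnit_P A₁_mul_P,
    inv_mul_mul_eq_of_mul_eq_mul isUnit_P A₃_mul_P⟩
end
end

section
/- (Phillips) Let A ∈ M₃(ℂ) satisfy Aᴴ·J·A = J, (A − 1)³ = 0, and A ≠ 1 (i.e. A is a nontrivial unipotent isometry), and let p₀ ∈ ℂ³ satisfy ⟨p₀, p₀⟩ < 0 (a real negative number). Then the bisectors B(p₀, A·p₀) and B(p₀, A⁻¹·p₀) are disjoint: there is no z ∈ ℂ³ with ⟨z, z⟩ < 0, |⟨z, p₀⟩| = |⟨z, A·p₀⟩|, and |⟨z, p₀⟩| = |⟨z, A⁻¹·p₀⟩|. -/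
/-
With `M = A - A⁻¹`, which is skew for the form and satisfies `M³ = 0`, one has
`A^{±1} = 1 ± M/2 + M²/8`. Writing `α = ⟨z,p₀⟩`, `b = ⟨z,Mp₀⟩` and `c = ⟨z,M²p₀⟩`, the two bisector
equations add up to `16|b|² + 16 Re(α c̄) + |c|² = 0`.

The orthogonal complement of a nonzero null vector `v` is positive semidefinite. If `v = M²p₀ ≠ 0`,
then `v` is null, `⟨p₀,v⟩ = -⟨Mp₀,Mp₀⟩ < 0`, and positivity of `⟨w,w⟩` for
`w = ⟨p₀,v⟩z - ⟨z,v⟩p₀ ∈ v^⊥` forces `Re(α c̄) > 0`, a contradiction. If `M²p₀ = 0`, then `c = 0`,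
so `b = 0`: `Mp₀` is a null vector orthogonal to the negative vector `z`, hence `Mp₀ = 0`. But
`M ≠ 0` (as `A ≠ 1`) has a nonzero null vector in its image, and that vector is orthogonal to `p₀`.
-/

noncomputable section

open Matrix

/-- Hermitian form ⟨Z,W⟩ = Z₁·conj(W₃) + Z₂·conj(W₂) + Z₃·conj(W₁). -/
def herm (Z W : Fin 3 → ℂ) : ℂ :=
  Z 0 * (starRingEnd ℂ) (W 2) + Z 1 * (starRingEnd ℂ) (W 1) + Z 2 * (starRingEnd ℂ) (W 0)

open ComplexConjugate

lemma conj_herm (x y : Fin 3 → ℂ) : conj (herm x y) = herm y x := by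
  simp only [herm, map_add, map_mul, Complex.conj_conj]; ring

lemma herm_self_eq_re (x : Fin 3 → ℂ) : herm x x = (herm x x).re :=
  (Complex.conj_eq_iff_re.1 (conj_herm x x)).symm

lemma herm_add_right (x y y' : Fin 3 → ℂ) : herm x (y + y') = herm x y + herm x y' := by
  simp only [herm, Pi.add_apply, map_add]; ring

lemma herm_sub_right (x y y' : Fin 3 → ℂ) : herm x (y - y') = herm x y - herm x y' := by
  simp only [herm, Pi.sub_apply, map_sub]; ring

lemma herm_smul_right (c : ℂ) (x y : Fin 3 → ℂ) : herm x (c • y) = conj c * herm x y := by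
  simp only [herm, Pi.smul_apply, smul_eq_mul, map_mul]; ring

lemma herm_sub_left (x x' y : Fin 3 → ℂ) : herm (x - x') y = herm x y - herm x' y := by
  simp only [herm, Pi.sub_apply]; ring

lemma herm_zero_right (x : Fin 3 → ℂ) : herm x 0 = 0 := by simp [herm]

lemma herm_eq_dotProduct (x y : Fin 3 → ℂ) : herm x y = star y ⬝ᵥ (Jmat *ᵥ x) := by
  simp only [herm, dotProduct, Pi.star_apply, RCLike.star_def, mulVec, Jmat, of_apply, cons_val',
    cons_val_fin_one, Fin.sum_univ_three, cons_val_zero, cons_val_one, cons_val, zero_mul, add_zero,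
    one_mul, zero_add]
  ring

lemma herm_mulVec_mulVec {A : Matrix (Fin 3) (Fin 3) ℂ} (hA : Aᴴ * Jmat * A = Jmat)
    (x y : Fin 3 → ℂ) : herm (A *ᵥ x) (A *ᵥ y) = herm x y := by
  rw [herm_eq_dotProduct, herm_eq_dotProduct, star_mulVec, ← dotProduct_mulVec, mulVec_mulVec,
    mulVec_mulVec, hA]

lemma re_herm_self_mul_eq_normSq_add_normSq {v w : Fin 3 → ℂ} (hvv : herm v v = 0)
    (hwv : herm w v = 0) :
    (herm w w).re * (Complex.normSq (v 0) + Complex.normSq (v 2)) =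
      Complex.normSq (w 1 * v 0 - w 0 * v 1) + Complex.normSq (w 1 * v 2 - w 2 * v 1) := by
  have hvw : herm v w = 0 := by rw [← conj_herm, hwv, map_zero]
  have h : herm w w * (v 0 * conj (v 0) + v 2 * conj (v 2)) =
      (w 1 * v 0 - w 0 * v 1) * conj (w 1 * v 0 - w 0 * v 1) +
        (w 1 * v 2 - w 2 * v 1) * conj (w 1 * v 2 - w 2 * v 1) := by
    simp only [herm] at hvv hwv hvw ⊢
    simp only [map_sub, map_mul]
    linear_combination (conj (w 2) * v 2 + conj (w 0) * v 0) * hwv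
      + (w 2 * conj (v 2) + w 0 * conj (v 0)) * hvw
      - (w 2 * conj (w 2) + w 0 * conj (w 0)) * hvv
  simp only [Complex.mul_conj, ← Complex.ofReal_add] at h
  rw [herm_self_eq_re w, ← Complex.ofReal_mul] at h
  exact_mod_cast h

lemma re_herm_self_nonneg_of_herm_eq_zero {v w : Fin 3 → ℂ} (hv : v ≠ 0) (hvv : herm v v = 0)
    (hwv : herm w v = 0) : 0 ≤ (herm w w).re := by
  have hpos : 0 < Complex.normSq (v 0) + Complex.normSq (v 2) := by
    by_contra! h
    have h0 : Complex.normSq (v 0) = 0 := by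
      linarith [Complex.normSq_nonneg (v 0), Complex.normSq_nonneg (v 2)]
    have h2 : Complex.normSq (v 2) = 0 := by
      linarith [Complex.normSq_nonneg (v 0), Complex.normSq_nonneg (v 2)]
    rw [Complex.normSq_eq_zero] at h0 h2
    have h1 : v 1 = 0 := by simpa [herm, h0, h2] using hvv
    exact hv (funext fun i => by fin_cases i <;> assumption)
  refine nonneg_of_mul_nonneg_left ?_ hpos
  rw [re_herm_self_mul_eq_normSq_add_normSq hvv hwv]
  exact add_nonneg (Complex.normSq_nonneg _) (Complex.normSq_nonneg _)

lemma herm_ne_zero_of_re_herm_self_neg {z v : Fin 3 → ℂ} (hz : (herm z z).re < 0) (hv : v ≠ 0)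
    (hvv : herm v v = 0) : herm z v ≠ 0 :=
  fun hzv => (re_herm_self_nonneg_of_herm_eq_zero hv hvv hzv).not_gt hz

lemma re_herm_mul_herm_mul_herm_neg {z p v : Fin 3 → ℂ} (hz : (herm z z).re < 0)
    (hp : (herm p p).re < 0) (hv : v ≠ 0) (hvv : herm v v = 0) :
    (herm z p * herm p v * herm v z).re < 0 := by
  set T := herm z p * herm p v * herm v z
  -- `w ⊥ v`, so `⟨w, w⟩ ≥ 0`; expanding `⟨w, w⟩` bounds `Re T` by a negative quantity.
  set w := herm p v • z - herm z v • p
  have hwv : herm w v = 0 := by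
    simp only [w, herm, Pi.sub_apply, Pi.smul_apply, smul_eq_mul]; ring
  have hww : herm w w = herm p v * conj (herm p v) * herm z z
      + herm z v * conj (herm z v) * herm p p - (T + conj T) := by
    simp only [T, w, herm, Pi.sub_apply, Pi.smul_apply, smul_eq_mul, map_add, map_sub, map_mul,
      Complex.conj_conj]
    ring
  have hww_re : (herm w w).re = Complex.normSq (herm p v) * (herm z z).re
      + Complex.normSq (herm z v) * (herm p p).re - 2 * T.re := by
    rw [hww, Complex.mul_conj, Complex.mul_conj, Complex.sub_re, Complex.add_re, Complex.add_re,
      Complex.re_ofReal_mul, Complex.re_ofReal_mul, Complex.conj_re]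
    ring
  have hzv := Complex.normSq_pos.2 (herm_ne_zero_of_re_herm_self_neg hz hv hvv)
  have := re_herm_self_nonneg_of_herm_eq_zero hv hvv hwv
  nlinarith [Complex.normSq_nonneg (herm p v)]

section Unipotent

variable {n K : Type*} [Fintype n] [DecidableEq n]

lemma Matrix.inv_eq_of_sub_one_pow_three_eq_zero [CommRing K] {A : Matrix n n K}
    (h : (A - 1) ^ 3 = 0) : A⁻¹ = 1 - (A - 1) + (A - 1) ^ 2 := by
  refine inv_eq_right_inv ?_
  rw [← sub_eq_zero, ← h]
  noncomm_ring

lemma Matrix.mul_inv_of_sub_one_pow_three_eq_zero [CommRing K] {A : Matrix n n K}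
    (h : (A - 1) ^ 3 = 0) : A * A⁻¹ = 1 := by
  rw [inv_eq_of_sub_one_pow_three_eq_zero h, ← sub_eq_zero, ← h]
  noncomm_ring

lemma Matrix.sub_inv_eq_of_sub_one_pow_three_eq_zero [CommRing K] {A : Matrix n n K}
    (h : (A - 1) ^ 3 = 0) : A - A⁻¹ = 2 • (A - 1) - (A - 1) ^ 2 := by
  rw [inv_eq_of_sub_one_pow_three_eq_zero h]
  noncomm_ring

lemma Matrix.sub_inv_pow_three_eq_zero [CommRing K] {A : Matrix n n K}
    (h : (A - 1) ^ 3 = 0) : (A - A⁻¹) ^ 3 = 0 := by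
  rw [sub_inv_eq_of_sub_one_pow_three_eq_zero h,
    show (2 • (A - 1) - (A - 1) ^ 2) ^ 3 = (A - 1) ^ 3 * (2 - (A - 1)) ^ 3 by noncomm_ring, h,
    zero_mul]

lemma Matrix.sub_inv_sq_eq [CommRing K] {A : Matrix n n K}
    (h : (A - 1) ^ 3 = 0) : (A - A⁻¹) ^ 2 = 4 • (A - 1) ^ 2 := by
  rw [sub_inv_eq_of_sub_one_pow_three_eq_zero h,
    show (2 • (A - 1) - (A - 1) ^ 2) ^ 2 = 4 • (A - 1) ^ 2 + (A - 1) ^ 3 * (A - 1 - 4) by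
      noncomm_ring, h, zero_mul, add_zero]

-- With `M = A - A⁻¹` this says `A = exp (M / 2)`.
lemma Matrix.eq_one_add_sub_inv [Field K] [CharZero K] {A : Matrix n n K}
    (h : (A - 1) ^ 3 = 0) :
    A = 1 + (2 : K)⁻¹ • (A - A⁻¹) + (8 : K)⁻¹ • (A - A⁻¹) ^ 2 := by
  rw [sub_inv_sq_eq h, sub_inv_eq_of_sub_one_pow_three_eq_zero h]
  match_scalars <;> norm_num

lemma Matrix.sub_inv_ne_zero [Field K] [CharZero K] {A : Matrix n n K}
    (h : (A - 1) ^ 3 = 0) (hA : A ≠ 1) : A - A⁻¹ ≠ 0 := by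
  intro h0
  rw [sub_inv_eq_of_sub_one_pow_three_eq_zero h, sub_eq_zero] at h0
  have h4 : 4 • (A - 1) = 0 := by
    rw [← h, pow_succ, ← h0, smul_mul_assoc, ← sq, ← h0, smul_smul]; rfl
  rw [← Nat.cast_smul_eq_nsmul K, smul_eq_zero, sub_eq_zero] at h4
  exact hA (h4.resolve_left (by norm_num))

lemma Matrix.inv_eq_one_sub_sub_inv [Field K] [CharZero K] {A : Matrix n n K}
    (h : (A - 1) ^ 3 = 0) :
    A⁻¹ = 1 - (2 : K)⁻¹ • (A - A⁻¹) + (8 : K)⁻¹ • (A - A⁻¹) ^ 2 := by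
  calc A⁻¹ = A - (A - A⁻¹) := (sub_sub_cancel A A⁻¹).symm
    _ = _ := by nth_rw 1 [eq_one_add_sub_inv h]; module

lemma Matrix.mulVec_mulVec_mulVec_of_pow_three_eq_zero [CommRing K] {M : Matrix n n K}
    (hM3 : M ^ 3 = 0) (x : n → K) :
    M *ᵥ M *ᵥ M *ᵥ x = 0 := by
  rw [mulVec_mulVec, mulVec_mulVec, ← pow_two, ← pow_succ, hM3, zero_mulVec]

end Unipotent

def IsHermSkew (M : Matrix (Fin 3) (Fin 3) ℂ) : Prop :=
  ∀ x y, herm (M *ᵥ x) y = -herm x (M *ᵥ y)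

section IsHermSkew

variable {M : Matrix (Fin 3) (Fin 3) ℂ}

lemma IsHermSkew.herm_mulVec_mulVec (hM : IsHermSkew M) (x : Fin 3 → ℂ) :
    herm x (M *ᵥ M *ᵥ x) = -herm (M *ᵥ x) (M *ᵥ x) := by
  rw [hM, neg_neg]

lemma IsHermSkew.herm_mulVec_mulVec_self (hM : IsHermSkew M) (hM3 : M ^ 3 = 0)
    (x : Fin 3 → ℂ) : herm (M *ᵥ M *ᵥ x) (M *ᵥ M *ᵥ x) = 0 := by
  rw [hM, mulVec_mulVec_mulVec_of_pow_three_eq_zero hM3, herm_zero_right, neg_zero]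

lemma IsHermSkew.herm_mulVec_mulVec_mulVec (hM : IsHermSkew M) (hM3 : M ^ 3 = 0)
    (x : Fin 3 → ℂ) : herm (M *ᵥ x) (M *ᵥ M *ᵥ x) = 0 := by
  rw [hM, mulVec_mulVec_mulVec_of_pow_three_eq_zero hM3, herm_zero_right, neg_zero]

lemma IsHermSkew.re_herm_mulVec_self_pos (hM : IsHermSkew M) (hM3 : M ^ 3 = 0)
    {p : Fin 3 → ℂ} (hp : (herm p p).re < 0) (hv : M *ᵥ M *ᵥ p ≠ 0) :
    0 < (herm (M *ᵥ p) (M *ᵥ p)).re := by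
  refine (re_herm_self_nonneg_of_herm_eq_zero hv (hM.herm_mulVec_mulVec_self hM3 p)
    (hM.herm_mulVec_mulVec_mulVec hM3 p)).lt_of_ne' fun h => ?_
  apply herm_ne_zero_of_re_herm_self_neg hp hv (hM.herm_mulVec_mulVec_self hM3 p)
  rw [hM.herm_mulVec_mulVec, herm_self_eq_re, h, Complex.ofReal_zero, neg_zero]

lemma IsHermSkew.re_herm_mul_conj_herm_pos (hM : IsHermSkew M) (hM3 : M ^ 3 = 0)
    {z p : Fin 3 → ℂ} (hz : (herm z z).re < 0) (hp : (herm p p).re < 0)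
    (hv : M *ᵥ M *ᵥ p ≠ 0) : 0 < (herm z p * conj (herm z (M *ᵥ M *ᵥ p))).re := by
  have h := re_herm_mul_herm_mul_herm_neg hz hp hv (hM.herm_mulVec_mulVec_self hM3 p)
  rw [hM.herm_mulVec_mulVec, herm_self_eq_re, ← conj_herm z, mul_right_comm, mul_neg,
    Complex.neg_re, Complex.re_mul_ofReal] at h
  nlinarith [hM.re_herm_mulVec_self_pos hM3 hp hv]

lemma IsHermSkew.exists_mulVec_ne_zero_herm_self_eq_zero (hM : IsHermSkew M) (hM3 : M ^ 3 = 0)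
    (hM0 : M ≠ 0) : ∃ y, M *ᵥ y ≠ 0 ∧ herm (M *ᵥ y) (M *ᵥ y) = 0 := by
  obtain ⟨x, hx⟩ : ∃ x, M *ᵥ x ≠ 0 := by
    by_contra! h
    exact hM0 (ext_iff_mulVec.2 fun x => by rw [h, zero_mulVec])
  by_cases hMx : M *ᵥ M *ᵥ x = 0
  · exact ⟨x, hx, by rw [← neg_eq_zero, ← hM.herm_mulVec_mulVec, hMx, herm_zero_right]⟩
  · exact ⟨M *ᵥ x, hMx, hM.herm_mulVec_mulVec_self hM3 x⟩

lemma IsHermSkew.re_herm_self_nonneg_of_mulVec_eq_zero (hM : IsHermSkew M) (hM3 : M ^ 3 = 0)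
    (hM0 : M ≠ 0) {p : Fin 3 → ℂ} (hp : M *ᵥ p = 0) : 0 ≤ (herm p p).re := by
  obtain ⟨y, hy, hnull⟩ := hM.exists_mulVec_ne_zero_herm_self_eq_zero hM3 hM0
  by_contra! hneg
  apply herm_ne_zero_of_re_herm_self_neg hneg hy hnull
  rw [← neg_eq_zero, ← hM, hp]
  simp [herm]

lemma IsHermSkew.mulVec_eq_zero_of_herm_eq_zero (hM : IsHermSkew M) {z p : Fin 3 → ℂ}
    (hz : (herm z z).re < 0) (hv : M *ᵥ M *ᵥ p = 0) (hzp : herm z (M *ᵥ p) = 0) :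
    M *ᵥ p = 0 := by
  by_contra h
  refine herm_ne_zero_of_re_herm_self_neg hz h ?_ hzp
  rw [← neg_eq_zero, ← hM.herm_mulVec_mulVec, hv, herm_zero_right]

end IsHermSkew

lemma isHermSkew_sub_inv {A : Matrix (Fin 3) (Fin 3) ℂ} (hiso : Aᴴ * Jmat * A = Jmat)
    (hA : A * A⁻¹ = 1) : IsHermSkew (A - A⁻¹) := by
  have h₁ (x y : Fin 3 → ℂ) : herm (A *ᵥ x) y = herm x (A⁻¹ *ᵥ y) := by
    rw [← herm_mulVec_mulVec hiso x, mulVec_mulVec, hA, one_mulVec]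
  have h₂ (x y : Fin 3 → ℂ) : herm (A⁻¹ *ᵥ x) y = herm x (A *ᵥ y) := by
    rw [← herm_mulVec_mulVec hiso, mulVec_mulVec, hA, one_mulVec]
  intro x y
  rw [sub_mulVec, sub_mulVec, herm_sub_left, herm_sub_right, h₁, h₂, neg_sub]

lemma herm_mulVec_of_sub_one_pow_three_eq_zero {A : Matrix (Fin 3) (Fin 3) ℂ}
    (h : (A - 1) ^ 3 = 0) (z p : Fin 3 → ℂ) :
    herm z (A *ᵥ p) = herm z p + 2⁻¹ * herm z ((A - A⁻¹) *ᵥ p)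
      + 8⁻¹ * herm z ((A - A⁻¹) *ᵥ (A - A⁻¹) *ᵥ p) := by
  conv_lhs => rw [eq_one_add_sub_inv h]
  rw [add_mulVec, add_mulVec, one_mulVec, smul_mulVec, smul_mulVec, herm_add_right,
    herm_add_right, herm_smul_right, herm_smul_right, pow_two, ← mulVec_mulVec]
  simp only [map_inv₀, map_ofNat]

lemma herm_inv_mulVec_of_sub_one_pow_three_eq_zero {A : Matrix (Fin 3) (Fin 3) ℂ}
    (h : (A - 1) ^ 3 = 0) (z p : Fin 3 → ℂ) :
    herm z (A⁻¹ *ᵥ p) = herm z p - 2⁻¹ * herm z ((A - A⁻¹) *ᵥ p)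
      + 8⁻¹ * herm z ((A - A⁻¹) *ᵥ (A - A⁻¹) *ᵥ p) := by
  conv_lhs => rw [inv_eq_one_sub_sub_inv h]
  rw [add_mulVec, sub_mulVec, one_mulVec, smul_mulVec, smul_mulVec, herm_add_right,
    herm_sub_right, herm_smul_right, herm_smul_right, pow_two, ← mulVec_mulVec]
  simp only [map_inv₀, map_ofNat]

lemma normSq_add_re_mul_conj_add_normSq_eq_zero {α b c : ℂ}
    (h₁ : ‖α‖ = ‖α + 2⁻¹ * b + 8⁻¹ * c‖) (h₂ : ‖α‖ = ‖α - 2⁻¹ * b + 8⁻¹ * c‖) :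
    16 * Complex.normSq b + 16 * (α * conj c).re + Complex.normSq c = 0 := by
  rw [← sq_eq_sq₀ (norm_nonneg _) (norm_nonneg _), Complex.sq_norm, Complex.sq_norm] at h₁ h₂
  simp only [Complex.normSq_apply, Complex.add_re, Complex.add_im, Complex.sub_re, Complex.sub_im,
    Complex.mul_re, Complex.mul_im, Complex.conj_re, Complex.conj_im] at h₁ h₂ ⊢
  norm_num at h₁ h₂
  linear_combination (-32) * h₁ - 32 * h₂

/-- Phillips' disjointness result for the two bisectors associated to a
nontrivial unipotent isometry. -/
theorem stmt12 (A : Matrix (Fin 3) (Fin 3) ℂ)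
    (hiso : Aᴴ * Jmat * A = Jmat) (huni : (A - 1) ^ 3 = 0) (hne : A ≠ 1)
    (p₀ : Fin 3 → ℂ) (hneg : ∃ r : ℝ, r < 0 ∧ herm p₀ p₀ = (r : ℂ)) :
    ¬ ∃ z : Fin 3 → ℂ, (∃ r : ℝ, r < 0 ∧ herm z z = (r : ℂ)) ∧
      ‖herm z p₀‖ = ‖herm z (A *ᵥ p₀)‖ ∧
      ‖herm z p₀‖ = ‖herm z (A⁻¹ *ᵥ p₀)‖ := by
  rintro ⟨z, ⟨r, hr, hzr⟩, h₁, h₂⟩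
  obtain ⟨r₀, hr₀, hpr⟩ := hneg
  have hz : (herm z z).re < 0 := by rw [hzr]; exact hr
  have hp : (herm p₀ p₀).re < 0 := by rw [hpr]; exact hr₀
  rw [herm_mulVec_of_sub_one_pow_three_eq_zero huni] at h₁
  rw [herm_inv_mulVec_of_sub_one_pow_three_eq_zero huni] at h₂
  have key := normSq_add_re_mul_conj_add_normSq_eq_zero h₁ h₂
  have hM : IsHermSkew (A - A⁻¹) :=
    isHermSkew_sub_inv hiso (mul_inv_of_sub_one_pow_three_eq_zero huni)
  have hM3 := sub_inv_pow_three_eq_zero huni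
  set M := A - A⁻¹
  by_cases hv : M *ᵥ M *ᵥ p₀ = 0
  · rw [hv, herm_zero_right] at key
    have hb : herm z (M *ᵥ p₀) = 0 := by simpa using key
    exact (hM.re_herm_self_nonneg_of_mulVec_eq_zero hM3 (sub_inv_ne_zero huni hne)
      (hM.mulVec_eq_zero_of_herm_eq_zero hz hv hb)).not_gt hp
  · linarith [hM.re_herm_mul_conj_herm_pos hM3 hz hp hv,
      Complex.normSq_nonneg (herm z (M *ᵥ p₀)), Complex.normSq_nonneg (herm z (M *ᵥ M *ᵥ p₀))]
end
end
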